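/- arXiv:1706.09041 — 4 statements merged into one kernel-verified Lean document; each statement's English description precedes it below -/
import Mathlib

section
/- Let N be a finite set and for each subset Y ⊆ N let g(Y) be a nonnegative integer such that g(X) = Σ_{X ⊆ Y ⊆ N} f(Y) for a function f. Then the sum of f(X) over all odd-cardinality subsets X ⊆ N equals Σ_{∅ ≠ Y ⊆ N} (-2)^{|Y|-1} g(Y). -/
open Finset

/-!
Substituting `g` and exchanging the two sums, `f X` is counted with coefficient
`∑_{∅ ≠ Y ⊆ X} (-2)^{|Y|-1}`. By the binomial theorem `-2` times this coefficient is
`(1 - 2)^{|X|} - 1`, so the coefficient is `1` for odd `|X|` and `0` for even `|X|`.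
-/

theorem sum_powerset_ne_empty_neg_two_pow_card_sub_one {α : Type*} [DecidableEq α]
    (Z : Finset α) :
    ∑ Y ∈ Z.powerset with Y ≠ ∅, (-2 : ℤ) ^ (#Y - 1) = if Odd #Z then 1 else 0 := by
  have binomial : ∑ Y ∈ Z.powerset, (-2 : ℤ) ^ #Y = (-1) ^ #Z := by
    simpa using sum_pow_mul_eq_add_pow (-2 : ℤ) 1 Z
  have split_empty : ∑ Y ∈ Z.powerset, (-2 : ℤ) ^ #Y
      = 1 + -2 * ∑ Y ∈ Z.powerset with Y ≠ ∅, (-2 : ℤ) ^ (#Y - 1) := by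
    rw [filter_ne', ← add_sum_erase _ _ (empty_mem_powerset Z), mul_sum, card_empty, pow_zero]
    refine congrArg _ (sum_congr rfl fun Y hY => ?_)
    rw [← pow_succ', Nat.sub_add_cancel (card_pos.2 (nonempty_iff_ne_empty.2 (ne_of_mem_erase hY)))]
  rcases Nat.even_or_odd #Z with hZ | hZ
  · rw [if_neg (Nat.not_odd_iff_even.2 hZ)]
    linarith [hZ.neg_one_pow (α := ℤ)]
  · rw [if_pos hZ]
    linarith [hZ.neg_one_pow (α := ℤ)]

theorem sum_powerset_mul_of_eq_sum_superset {α R : Type*} [DecidableEq α]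
    [NonUnitalNonAssocSemiring R] (N : Finset α) (c f g : Finset α → R)
    (h : ∀ X ⊆ N, g X = ∑ Y ∈ N.powerset with X ⊆ Y, f Y) :
    ∑ Y ∈ N.powerset, c Y * g Y = ∑ X ∈ N.powerset, (∑ Y ∈ X.powerset, c Y) * f X := by
  calc ∑ Y ∈ N.powerset, c Y * g Y
      = ∑ Y ∈ N.powerset, ∑ X ∈ N.powerset with Y ⊆ X, c Y * f X := by
        refine sum_congr rfl fun Y hY => ?_
        rw [h Y (mem_powerset.1 hY), mul_sum]
    _ = ∑ X ∈ N.powerset, ∑ Y ∈ X.powerset, c Y * f X := by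
        refine sum_comm' fun Y X => ?_
        simp only [mem_filter, mem_powerset]
        exact ⟨fun ⟨_, hXN, hYX⟩ => ⟨hYX, hXN⟩, fun ⟨hYX, hXN⟩ => ⟨hYX.trans hXN, hXN, hYX⟩⟩
    _ = ∑ X ∈ N.powerset, (∑ Y ∈ X.powerset, c Y) * f X := by
        simp only [sum_mul]

/-- Möbius-inversion identity: if `g X = Σ_{X ⊆ Y ⊆ N} f Y`, then the sum of
`f X` over odd-cardinality subsets `X ⊆ N` equals `Σ_{∅ ≠ Y ⊆ N} (-2)^{|Y|-1} g Y`. -/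
theorem stmt0 {α : Type*} [DecidableEq α] (N : Finset α) (f g : Finset α → ℝ)
    (h : ∀ X ⊆ N, g X = ∑ Y ∈ N.powerset.filter (fun Y => X ⊆ Y), f Y) :
    ∑ X ∈ N.powerset.filter (fun X => Odd X.card), f X
      = ∑ Y ∈ N.powerset.filter (fun Y => Y ≠ ∅), (-2 : ℝ) ^ (Y.card - 1) * g Y := by
  have coeff (X : Finset α) :
      ∑ Y ∈ X.powerset, (if Y ≠ ∅ then (-2 : ℝ) ^ (#Y - 1) else 0) = if Odd #X then 1 else 0 := by
    rw [← sum_filter]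
    exact_mod_cast sum_powerset_ne_empty_neg_two_pow_card_sub_one X
  simp only [sum_filter, ← ite_zero_mul]
  rw [sum_powerset_mul_of_eq_sum_superset N _ f g h]
  simp only [coeff, ite_mul, one_mul, zero_mul]
end

section
/- For the complete graph K_n with n ≥ 3, the set of negative cycle vectors of all signings of K_n spans a real vector space of dimension n - 2. -/
/-!
Give each edge of `K_n` independently the sign `-1` with probability `a`. A fixed `l`-cycle is
then negative with probability `(1 - (1 - 2a)^l) / 2`, so averaging the negative cycle vectors
with these weights shows that the span contains `(c_l (1 - x^l))_l` for every real `x`, where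
`c_l > 0` is the number of `l`-cycles. Differences give the vectors `(c_l x^l)_l`, and a linear
form vanishing on all of them would make the nonzero polynomial `∑ λ_l c_l X^l` vanish on `ℝ`.
-/

open Finset

/-- The set of edge sets of cycles of length `l` in `G`, as unoriented cycle subgraphs. -/
def cycleSets {V : Type*} [DecidableEq V] (G : SimpleGraph V) (l : ℕ) : Set (Finset (Sym2 V)) :=
  {C | ∃ (v : V) (w : G.Walk v v), w.IsCycle ∧ w.length = l ∧ w.edges.toFinset = C}

/-- The number of cycles of length `l` in `G`. -/
noncomputable def cycleCount {V : Type*} [DecidableEq V] (G : SimpleGraph V) (l : ℕ) : ℕ :=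
  (cycleSets G l).ncard

/-- The number of negative `l`-cycles of `G` signed with negative edge set `N`:
cycles meeting `N` in an odd number of edges. -/
noncomputable def negCycleCount {V : Type*} [DecidableEq V] (G : SimpleGraph V)
    (N : Finset (Sym2 V)) (l : ℕ) : ℕ :=
  {C | C ∈ cycleSets G l ∧ Odd (C ∩ N).card}.ncard

/-- The number of negative `l`-cycles of `G` with edge sign function `σ`. -/
noncomputable def negCycleCountS {V : Type*} [DecidableEq V] (G : SimpleGraph V)
    (σ : Sym2 V → ℤ) (l : ℕ) : ℕ :=
  {C | C ∈ cycleSets G l ∧ ∏ e ∈ C, σ e = -1}.ncard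

/-- A set of edges is a matching: its members are pairwise vertex-disjoint. -/
def IsMatchingSet {V : Type*} (S : Finset (Sym2 V)) : Prop :=
  ∀ e ∈ S, ∀ f ∈ S, e ≠ f → ∀ v : V, v ∈ e → v ∉ f

/-- The sign multiplier on edges produced by switching at the vertex set `X`. -/
def switchSign {V : Type*} [DecidableEq V] (X : Finset V) : Sym2 V → ℤ :=
  Sym2.lift ⟨fun a b => (if a ∈ X then (-1 : ℤ) else 1) * (if b ∈ X then (-1 : ℤ) else 1),
    fun _ _ => mul_comm _ _⟩

/-- The set of (potential) edges with exactly one endpoint in `X`. -/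
def crossEdges {V : Type*} [Fintype V] [DecidableEq V] (X : Finset V) : Finset (Sym2 V) :=
  (X ×ˢ Xᶜ).image fun p => s(p.1, p.2)

open Function Polynomial Set Submodule

section SubsetWeight

variable {ι R : Type*} [DecidableEq ι] [CommRing R]

theorem sum_neg_one_pow_card_inter (S : Finset (Finset ι)) (N : Finset ι) :
    ∑ C ∈ S, (-1 : R) ^ #(C ∩ N) = #S - 2 * #{C ∈ S | Odd #(C ∩ N)} := by
  have hparity : ∀ C, (-1 : R) ^ #(C ∩ N) = 1 - 2 * if Odd #(C ∩ N) then 1 else 0 := fun C => by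
    rcases Nat.even_or_odd #(C ∩ N) with h | h
    · simp [h.neg_one_pow, Nat.not_odd_iff_even.2 h]
    · simp only [h.neg_one_pow, h, ↓reduceIte]; ring
  rw [sum_congr rfl fun C _ => hparity C, sum_sub_distrib, ← mul_sum, sum_boole]
  simp

variable [Fintype ι]

/-- The probability of drawing `N` when each element of `ι` is put in independently with
probability `a`. -/
def subsetWeight (a : R) (N : Finset ι) : R := a ^ #N * (1 - a) ^ #Nᶜ

theorem sum_subsetWeight_mul_neg_one_pow (a : R) (C : Finset ι) :
    ∑ N, subsetWeight a N * (-1) ^ #(C ∩ N) = (1 - 2 * a) ^ #C := by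
  have hsplit : ∀ e, (if e ∈ C then -1 else 1) * a + (1 - a) = if e ∈ C then 1 - 2 * a else 1 :=
    fun e => by split_ifs <;> ring
  have := Fintype.prod_add (fun e => (if e ∈ C then -1 else 1) * a) (fun _ => 1 - a)
  simp only [hsplit, prod_mul_distrib, prod_ite_mem, prod_const, Finset.univ_inter] at this
  rw [this]
  exact sum_congr rfl fun N _ => by rw [subsetWeight, Finset.inter_comm]; ring

theorem sum_subsetWeight (a : R) : ∑ N : Finset ι, subsetWeight a N = 1 := by
  simpa using sum_subsetWeight_mul_neg_one_pow a (∅ : Finset ι)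

theorem two_mul_sum_subsetWeight_mul_card_odd {S : Finset (Finset ι)} {l : ℕ}
    (hS : ∀ C ∈ S, #C = l) (a : R) :
    2 * ∑ N, subsetWeight a N * #{C ∈ S | Odd #(C ∩ N)} = #S * (1 - (1 - 2 * a) ^ l) := by
  have hsigned : ∑ N, subsetWeight a N * ∑ C ∈ S, (-1 : R) ^ #(C ∩ N) = #S * (1 - 2 * a) ^ l := by
    simp_rw [mul_sum]
    rw [sum_comm]
    simp_rw [sum_subsetWeight_mul_neg_one_pow]
    rw [sum_congr rfl fun C hC => by rw [hS C hC], sum_const, nsmul_eq_mul]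
  simp_rw [sum_neg_one_pow_card_inter, mul_sub, sum_sub_distrib, ← sum_mul, sum_subsetWeight,
    mul_left_comm _ (2 : R), ← mul_sum] at hsigned
  linear_combination -hsigned

end SubsetWeight

theorem span_range_mul_pow_eq_top {K κ : Type*} [Field K] [Infinite K] [Fintype κ]
    {c : κ → K} (hc : ∀ i, c i ≠ 0) {d : κ → ℕ} (hd : Injective d) :
    span K (range fun x : K => fun i => c i * x ^ d i) = ⊤ := by
  classical
  by_contra hne
  obtain ⟨φ, hφ, hker⟩ := (span K _).exists_le_ker_of_lt_top (lt_top_iff_ne_top.2 hne)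
  set p : K[X] := ∑ i, monomial (d i) (c i * φ (Pi.single i 1))
  have hp : p = 0 := Polynomial.funext fun x => by
    have hx : φ (fun i => c i * x ^ d i) = 0 := hker (subset_span ⟨x, rfl⟩)
    rw [pi_eq_sum_univ' (fun i => c i * x ^ d i), map_sum] at hx
    simpa [p, eval_finsetSum, mul_assoc, mul_comm (x ^ _)] using hx
  refine hφ (LinearMap.pi_ext' fun i => LinearMap.ext_ring ?_)
  simpa [p, finsetSum_coeff, coeff_monomial, hd.eq_iff, hc i] using congrArg (coeff · (d i)) hp

theorem span_range_card_odd_inter_eq_top {ι K κ : Type*} [Fintype ι] [DecidableEq ι] [Field K]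
    [CharZero K] [Fintype κ] {S : κ → Finset (Finset ι)} {d : κ → ℕ} (hd : Injective d)
    (hd0 : ∀ i, d i ≠ 0) (hS : ∀ i, (S i).Nonempty) (hcard : ∀ i, ∀ C ∈ S i, #C = d i) :
    span K (range fun N : Finset ι => fun i => (#{C ∈ S i | Odd #(C ∩ N)} : K)) = ⊤ := by
  set W := span K (range fun N : Finset ι => fun i => (#{C ∈ S i | Odd #(C ∩ N)} : K))
  have haverage : ∀ x : K, (fun i => (#(S i) : K) * (1 - x ^ d i)) ∈ W := by
    intro x
    have : (fun i => (#(S i) : K) * (1 - x ^ d i))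
        = ∑ N, (2 * subsetWeight ((1 - x) / 2) N) • fun i => (#{C ∈ S i | Odd #(C ∩ N)} : K) := by
      ext i
      have h := two_mul_sum_subsetWeight_mul_card_odd (hcard i) ((1 - x) / 2)
      rw [show 1 - 2 * ((1 - x) / 2) = x by ring] at h
      simp [← h, mul_sum, mul_assoc]
    rw [this]
    exact sum_mem fun N _ => smul_mem _ _ (subset_span ⟨N, rfl⟩)
  have hpow : ∀ x : K, (fun i => (#(S i) : K) * x ^ d i) ∈ W := by
    intro x
    convert sub_mem (haverage 0) (haverage x) using 1
    ext i
    simp only [Pi.sub_apply, zero_pow (hd0 i)]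
    ring
  rw [eq_top_iff, ← span_range_mul_pow_eq_top (fun i => Nat.cast_ne_zero.2 (hS i).card_pos.ne') hd]
  exact span_le.2 (range_subset_iff.2 hpow)

section Cycles

variable {V : Type*} [DecidableEq V]

theorem card_eq_of_mem_cycleSets {G : SimpleGraph V} {l : ℕ} {C : Finset (Sym2 V)}
    (h : C ∈ cycleSets G l) : #C = l := by
  obtain ⟨v, w, hc, hlen, rfl⟩ := h
  rw [List.toFinset_card_of_nodup hc.edges_nodup, SimpleGraph.Walk.length_edges, hlen]

theorem negCycleCount_eq_card_filter [Finite V] (G : SimpleGraph V) (N : Finset (Sym2 V))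
    (l : ℕ) : negCycleCount G N l = #{C ∈ (cycleSets G l).toFinite.toFinset | Odd #(C ∩ N)} := by
  rw [negCycleCount, ← Set.ncard_coe_finset]
  congr 1
  ext C
  simp

theorem cycleSets_top_nonempty {n l : ℕ} (h3 : 3 ≤ l) (hl : l ≤ n) :
    (cycleSets (⊤ : SimpleGraph (Fin n)) l).Nonempty := by
  obtain ⟨v, w, hc, hlen⟩ := (SimpleGraph.cycleGraph_isContained_iff h3).1
    (SimpleGraph.isContained_top_iff.2 ⟨Fin.castLEEmb hl⟩)
  exact ⟨_, v, w, hc, hlen, rfl⟩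

end Cycles

theorem stmt10_general (n : ℕ) :
    Module.finrank ℝ (Submodule.span ℝ
      (Set.range fun N : Finset (Sym2 (Fin n)) =>
        fun i : Fin (n - 2) =>
          (negCycleCount (⊤ : SimpleGraph (Fin n)) N ((i : ℕ) + 3) : ℝ)))
      = n - 2 := by
  set S : Fin (n - 2) → Finset (Finset (Sym2 (Fin n))) :=
    fun i => (cycleSets (⊤ : SimpleGraph (Fin n)) (i + 3)).toFinite.toFinset
  have hS : ∀ i, (S i).Nonempty := fun i =>
    (Set.Finite.toFinset_nonempty _).2 (cycleSets_top_nonempty (by omega) (by omega))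
  have hcard : ∀ i, ∀ C ∈ S i, #C = i + 3 := fun i C hC =>
    card_eq_of_mem_cycleSets ((Set.Finite.mem_toFinset _).1 hC)
  have hvec : (fun N : Finset (Sym2 (Fin n)) => fun i : Fin (n - 2) =>
      (negCycleCount (⊤ : SimpleGraph (Fin n)) N ((i : ℕ) + 3) : ℝ))
      = fun N i => (#{C ∈ S i | Odd #(C ∩ N)} : ℝ) :=
    funext₂ fun N i => by rw [negCycleCount_eq_card_filter]
  rw [hvec, span_range_card_odd_inter_eq_top ((add_left_injective 3).comp Fin.val_injective)
    (fun _ => Nat.succ_ne_zero _) hS hcard, finrank_top, Module.finrank_fin_fun]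

/-- The negative cycle vectors of all signings of `K_n` (`n ≥ 3`) span a
space of dimension `n - 2`. -/
theorem stmt10 (n : ℕ) (hn : 3 ≤ n) :
    Module.finrank ℝ (Submodule.span ℝ
      (Set.range fun N : Finset (Sym2 (Fin n)) =>
        fun i : Fin (n - 2) =>
          (negCycleCount (⊤ : SimpleGraph (Fin n)) N ((i : ℕ) + 3) : ℝ)))
      = n - 2 :=
  stmt10_general n
end

section
/- Any edge set S of a graph Γ on which Aut(Γ) acts as the full symmetric group S_{|S|}, with |S| ≥ 3, is one of: a matching, a subset of edges all incident to a common vertex, or the three edges of a triangle. -/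
open Finset

/-! The symmetric group on `S` is 2-transitive, so an automorphism realising a suitable
permutation carries any pair of distinct edges of `S` onto any other; sharing a vertex is
preserved by automorphisms, hence either no two edges of `S` meet (a matching) or every two do.
Pairwise meeting edges not through a common vertex must form a triangle: an edge `ab`, an edge
`bc` avoiding `a`, an edge `ac` avoiding `b`, and any further edge meeting all three sides of
the triangle is one of them. -/

namespace Sym2

variable {V : Type*}

theorem exists_mem_and_mem_mk_iff {z : Sym2 V} {a b : V} :
    (∃ v ∈ z, v ∈ s(a, b)) ↔ a ∈ z ∨ b ∈ z := by
  simp only [mem_iff, and_or_left, exists_or, exists_eq_right]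

theorem eq_side_of_meets_triangle {z : Sym2 V} {a b c : V}
    (hab : a ≠ b) (hbc : b ≠ c) (hac : a ≠ c)
    (h₁ : a ∈ z ∨ b ∈ z) (h₂ : b ∈ z ∨ c ∈ z) (h₃ : a ∈ z ∨ c ∈ z) :
    z = s(a, b) ∨ z = s(b, c) ∨ z = s(a, c) := by
  by_cases ha : a ∈ z
  · by_cases hb : b ∈ z
    · exact .inl ((mem_and_mem_iff hab).mp ⟨ha, hb⟩)
    · exact .inr (.inr ((mem_and_mem_iff hac).mp ⟨ha, h₂.resolve_left hb⟩))
  · exact .inr (.inl ((mem_and_mem_iff hbc).mp ⟨h₁.resolve_left ha, h₃.resolve_left ha⟩))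

end Sym2

theorem Finset.exists_mem_all_or_eq_triangle_of_pairwise_meet {V : Type*} [DecidableEq V]
    {S : Finset (Sym2 V)}
    (hS : S.Nonempty) (hdiag : ∀ e ∈ S, ¬ e.IsDiag)
    (hmeet : ∀ e ∈ S, ∀ f ∈ S, ∃ v ∈ e, v ∈ f) :
    (∃ v, ∀ e ∈ S, v ∈ e) ∨ ∃ a b c : V, S = {s(a, b), s(b, c), s(a, c)} := by
  refine or_iff_not_imp_left.mpr fun hstar => ?_
  push Not at hstar
  obtain ⟨⟨a, b⟩, hab_mem⟩ := hS
  have hab : a ≠ b := hdiag _ hab_mem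
  obtain ⟨e₂, he₂, ha₂⟩ := hstar a
  have hb₂ : b ∈ e₂ :=
    (Sym2.exists_mem_and_mem_mk_iff.mp (hmeet e₂ he₂ _ hab_mem)).resolve_left ha₂
  obtain ⟨c, rfl⟩ := Sym2.mem_iff_exists.mp hb₂
  have hbc : b ≠ c := hdiag _ he₂
  have hac : a ≠ c := fun h => ha₂ (h ▸ Sym2.mem_mk_right b a)
  obtain ⟨e₃, he₃, hb₃⟩ := hstar b
  have ha₃ : a ∈ e₃ :=
    (Sym2.exists_mem_and_mem_mk_iff.mp (hmeet e₃ he₃ _ hab_mem)).resolve_right hb₃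
  have hc₃ : c ∈ e₃ :=
    (Sym2.exists_mem_and_mem_mk_iff.mp (hmeet e₃ he₃ _ he₂)).resolve_left hb₃
  obtain rfl : e₃ = s(a, c) := (Sym2.mem_and_mem_iff hac).mp ⟨ha₃, hc₃⟩
  refine ⟨a, b, c, Finset.ext fun z => ⟨fun hz => ?_, fun hz => ?_⟩⟩
  · have := Sym2.eq_side_of_meets_triangle hab hbc hac
      (Sym2.exists_mem_and_mem_mk_iff.mp (hmeet z hz _ hab_mem))
      (Sym2.exists_mem_and_mem_mk_iff.mp (hmeet z hz _ he₂))
      (Sym2.exists_mem_and_mem_mk_iff.mp (hmeet z hz _ he₃))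
    simpa only [mem_insert, mem_singleton] using this
  · simp only [mem_insert, mem_singleton] at hz
    rcases hz with rfl | rfl | rfl <;> assumption

namespace SimpleGraph

variable {V : Type*} {G : SimpleGraph V}

def IsPermutableEdgeSet (G : SimpleGraph V) (S : Finset (Sym2 V)) : Prop :=
  ∀ π : Equiv.Perm {e // e ∈ S}, ∃ φ : G ≃g G, ∀ e : {e // e ∈ S}, Sym2.map φ e.val = (π e).val

theorem IsPermutableEdgeSet.meet_of_meet {S : Finset (Sym2 V)} (hS : G.IsPermutableEdgeSet S)
    {e f g h : {e // e ∈ S}} (hef : e ≠ f) (hgh : g ≠ h) (hmeet : ∃ v ∈ e.val, v ∈ f.val) :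
    ∃ v ∈ g.val, v ∈ h.val := by
  obtain ⟨π, hπe, hπf⟩ :=
    MulAction.is_two_pretransitive_iff.mp (Equiv.Perm.isMultiplyPretransitive _ 2) hef hgh
  obtain ⟨φ, hφ⟩ := hS π
  obtain ⟨v, hve, hvf⟩ := hmeet
  refine ⟨φ v, ?_, ?_⟩
  · rw [← hπe, Equiv.Perm.smul_def, ← hφ]
    exact Sym2.mem_map.mpr ⟨v, hve, rfl⟩
  · rw [← hπf, Equiv.Perm.smul_def, ← hφ]
    exact Sym2.mem_map.mpr ⟨v, hvf, rfl⟩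

theorem IsPermutableEdgeSet.pairwise_meet {S : Finset (Sym2 V)} (hS : G.IsPermutableEdgeSet S)
    (hnot : ¬ IsMatchingSet S) : ∀ g ∈ S, ∀ h ∈ S, ∃ v ∈ g, v ∈ h := by
  simp only [IsMatchingSet, not_forall, not_not, exists_prop] at hnot
  obtain ⟨e, he, f, hf, hef, v, hve, hvf⟩ := hnot
  intro g hg h hh
  by_cases hgh : g = h
  · exact ⟨g.out.1, g.out_fst_mem, hgh ▸ g.out_fst_mem⟩
  exact hS.meet_of_meet (e := ⟨e, he⟩) (f := ⟨f, hf⟩) (g := ⟨g, hg⟩) (h := ⟨h, hh⟩)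
    (by simpa using hef) (by simpa using hgh) ⟨v, hve, hvf⟩

end SimpleGraph

theorem stmt15_general {V : Type*} [DecidableEq V] (G : SimpleGraph V)
    (S : Finset (Sym2 V)) (hSe : ∀ e ∈ S, e ∈ G.edgeSet)
    (hperm : ∀ π : Equiv.Perm {e // e ∈ S}, ∃ φ : G ≃g G,
      ∀ e : {e // e ∈ S}, Sym2.map φ e.val = (π e).val) :
    IsMatchingSet S ∨ (∃ v : V, ∀ e ∈ S, v ∈ e) ∨
      (∃ a b c : V, G.Adj a b ∧ G.Adj b c ∧ G.Adj a c ∧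
        S = {s(a, b), s(b, c), s(a, c)}) := by
  by_cases hmatch : IsMatchingSet S
  · exact .inl hmatch
  have hnonempty : S.Nonempty := by
    contrapose! hmatch
    simp [hmatch, IsMatchingSet]
  rcases Finset.exists_mem_all_or_eq_triangle_of_pairwise_meet hnonempty
      (fun e he => G.not_isDiag_of_mem_edgeSet (hSe e he))
      (SimpleGraph.IsPermutableEdgeSet.pairwise_meet hperm hmatch) with hstar | ⟨a, b, c, rfl⟩
  · exact .inr (.inl hstar)
  · exact .inr (.inr ⟨a, b, c, hSe s(a, b) (by simp), hSe s(b, c) (by simp),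
      hSe s(a, c) (by simp), rfl⟩)

/-- Any edge set `S` with `|S| ≥ 3` on which `Aut(Γ)` acts as the full
symmetric group is a matching, a set of edges all incident to one vertex, or the three
edges of a triangle. -/
theorem stmt15 {V : Type*} [Fintype V] [DecidableEq V] (G : SimpleGraph V)
    (S : Finset (Sym2 V)) (hSe : ∀ e ∈ S, e ∈ G.edgeSet) (h3 : 3 ≤ S.card)
    (hperm : ∀ π : Equiv.Perm {e // e ∈ S}, ∃ φ : G ≃g G,
      ∀ e : {e // e ∈ S}, Sym2.map φ e.val = (π e).val) :
    IsMatchingSet S ∨ (∃ v : V, ∀ e ∈ S, v ∈ e) ∨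
      (∃ a b c : V, G.Adj a b ∧ G.Adj b c ∧ G.Adj a c ∧
        S = {s(a, b), s(b, c), s(a, c)}) :=
  stmt15_general G S hSe hperm
end

section
/- In the Petersen graph, for the permutable 3-matching M_3 consisting of three alternate edges of a 6-cycle: the maximum, over all cycles C_l of length l, of |E(C_l) ∩ M_3| equals 2 for l = 5, 3 for l = 6, 2 for l = 8, and 3 for l = 9. -/
open Finset

/-- The Petersen graph: outer 5-cycle on `(i, false)`, inner pentagram on `(i, true)`,
and spokes `(i, false) — (i, true)`. -/
def petersen : SimpleGraph (ZMod 5 × Bool) :=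
  SimpleGraph.fromRel fun p q =>
    (p.2 = false ∧ q.2 = false ∧ q.1 = p.1 + 1) ∨
    (p.2 = true ∧ q.2 = true ∧ q.1 = p.1 + 2) ∨
    (p.1 = q.1 ∧ p.2 = false ∧ q.2 = true)

/-- A permutable 3-matching in the Petersen graph: the three alternate edges
`O₀O₁`, `I₁I₃`, `O₃O₄` of the 6-cycle `O₀ O₁ I₁ I₃ O₃ O₄`. -/
def petersenM3 : Finset (Sym2 (ZMod 5 × Bool)) :=
  {s(((0 : ZMod 5), false), ((1 : ZMod 5), false)),
   s(((1 : ZMod 5), true), ((3 : ZMod 5), true)),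
   s(((3 : ZMod 5), false), ((4 : ZMod 5), false))}

/-! For the lower bounds we exhibit cycles: the hexagon whose alternate edges form `petersenM3`,
a 9-cycle through all of it, and a 5- and an 8-cycle through two of its edges. The bound 3 is
`|petersenM3|`. For `l = 5, 8` it remains to see that no `l`-cycle contains all of `petersenM3`.
Rotated to start at `(0, false)`, an endpoint of a matching edge, such a cycle is a path of
length `l - 1` ending at `(0, false)` closed by one edge; these paths are listed by growing them
backwards one neighbour at a time, and `decide` checks them. -/

namespace SimpleGraph

variable {V : Type*} {G : SimpleGraph V}

theorem Walk.isCycle_of_support_tail_nodup {v : V} {c : G.Walk v v} (h3 : 3 ≤ c.length)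
    (hnodup : c.support.tail.Nodup) : c.IsCycle := by
  have hnil : ¬ c.Nil := Walk.not_nil_iff_lt_length.mpr (by omega)
  refine Walk.isCycle_iff_isPath_tail_and_le_length.mpr ⟨.mk' ?_, h3⟩
  rwa [c.support_tail_of_not_nil hnil]

variable [DecidableEq V]

theorem isGreatest_card_inter_of_isCycle (M : Finset (Sym2 V)) {l k : ℕ} {v : V}
    {c : G.Walk v v} (hc : c.IsCycle) (hl : c.length = l) (hk : (c.edges.toFinset ∩ M).card = k)
    (hle : ∀ C ∈ cycleSets G l, (C ∩ M).card ≤ k) :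
    IsGreatest {k | ∃ C ∈ cycleSets G l, (C ∩ M).card = k} k :=
  ⟨⟨_, ⟨v, c, hc, hl, rfl⟩, hk⟩, by rintro _ ⟨C, hC, rfl⟩; exact hle C hC⟩

theorem exists_isCycle_of_mem_cycleSets {l : ℕ} {C : Finset (Sym2 V)}
    (hC : C ∈ cycleSets G l) {a b : V} (hab : s(a, b) ∈ C) :
    ∃ c : G.Walk a a, c.IsCycle ∧ c.length = l ∧ c.edges.toFinset = C := by
  obtain ⟨v, w, hw, rfl, rfl⟩ := hC
  have ha : a ∈ w.support := w.fst_mem_support_of_mem_edges (List.mem_toFinset.mp hab)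
  have hrot := w.rotate_edges a ha
  refine ⟨w.rotate a ha, hw.rotate ha, ?_, ?_⟩
  · rw [← Walk.length_edges, ← Walk.length_edges, hrot.perm.length_eq]
  · ext e
    simp [hrot.mem_iff]

/-- The vertex lists of the paths of length `n` ending at `v`, provided `nbrs a` lists all
neighbours of `a`. -/
def pathSupports (nbrs : V → List V) : ℕ → V → List (List V)
  | 0, v => [[v]]
  | n + 1, v => (pathSupports nbrs n v).flatMap fun l =>
      ((nbrs (l.headD v)).filter (· ∉ l)).map (· :: l)

theorem Walk.IsPath.support_mem_pathSupports {nbrs : V → List V}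
    (hnbrs : ∀ a b, G.Adj a b → b ∈ nbrs a) {u v : V} {p : G.Walk u v} (hp : p.IsPath) :
    p.support ∈ pathSupports nbrs p.length v := by
  induction p with
  | nil => simp [pathSupports]
  | @cons u w v h p ih =>
    rw [Walk.cons_isPath_iff] at hp
    simp only [Walk.support_cons, Walk.length_cons, pathSupports, List.mem_flatMap,
      List.mem_map, List.mem_filter]
    refine ⟨p.support, ih hp.1, u, ⟨?_, by simpa using hp.2⟩, rfl⟩
    rw [← p.cons_tail_support, List.headD_cons]
    exact hnbrs _ _ h.symm

def cycleEdgeLists (nbrs : V → List V) (n : ℕ) (v : V) : List (List (Sym2 V)) :=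
  ((pathSupports nbrs n v).filter fun l => l.headD v ∈ nbrs v).map fun l =>
    List.zipWith (s(·, ·)) (v :: l) l

theorem Walk.IsCycle.edges_mem_cycleEdgeLists {nbrs : V → List V}
    (hnbrs : ∀ a b, G.Adj a b → b ∈ nbrs a) {v : V} {c : G.Walk v v} (hc : c.IsCycle) :
    c.edges ∈ cycleEdgeLists nbrs (c.length - 1) v := by
  cases c with
  | nil => exact absurd hc Walk.not_isCycle_nil
  | cons h p =>
    rw [Walk.cons_isCycle_iff] at hc
    refine List.mem_map.mpr ⟨p.support, List.mem_filter.mpr ⟨?_, ?_⟩, ?_⟩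
    · simpa using hc.1.support_mem_pathSupports hnbrs
    · rw [← p.cons_tail_support, List.headD_cons]
      simpa using hnbrs _ _ h
    · rw [Walk.edges_eq_zipWith_support]
      simp

end SimpleGraph

open SimpleGraph

instance : DecidableRel petersen.Adj := fun a b =>
  decidable_of_iff _ (fromRel_adj _ a b).symm

def petersenNbrs (p : ZMod 5 × Bool) : List (ZMod 5 × Bool) :=
  if p.2 then [(p.1 + 2, true), (p.1 + 3, true), (p.1, false)]
  else [(p.1 + 1, false), (p.1 + 4, false), (p.1, true)]

theorem petersen_adj_mem_nbrs : ∀ a b, petersen.Adj a b → b ∈ petersenNbrs a := by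
  decide

theorem petersenM3_card : petersenM3.card = 3 := by
  decide

theorem petersenM3_not_subset_cycleEdgeLists :
    ∀ l ∈ [5, 8], ∀ es ∈ cycleEdgeLists petersenNbrs (l - 1) (0, false),
      ¬ petersenM3 ⊆ es.toFinset := by
  decide

theorem petersenM3_not_subset_of_mem_cycleSets {l : ℕ} (hl : l = 5 ∨ l = 8)
    {C : Finset (Sym2 (ZMod 5 × Bool))} (hC : C ∈ cycleSets petersen l) :
    ¬ petersenM3 ⊆ C := by
  intro hM
  obtain ⟨c, hc, rfl, rfl⟩ :=
    exists_isCycle_of_mem_cycleSets hC (hM (by decide : s((0, false), (1, false)) ∈ petersenM3))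
  exact petersenM3_not_subset_cycleEdgeLists _ (by simpa using hl) _
    (hc.edges_mem_cycleEdgeLists petersen_adj_mem_nbrs) hM

theorem card_inter_petersenM3_le_two {l : ℕ} (hl : l = 5 ∨ l = 8)
    {C : Finset (Sym2 (ZMod 5 × Bool))} (hC : C ∈ cycleSets petersen l) :
    (C ∩ petersenM3).card ≤ 2 := by
  have hlt : (C ∩ petersenM3).card < petersenM3.card :=
    card_lt_card <| inter_subset_right.ssubset_of_not_subset fun h =>
      petersenM3_not_subset_of_mem_cycleSets hl hC (h.trans inter_subset_left)
  rw [petersenM3_card] at hlt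
  omega

theorem card_inter_petersenM3_le_three (C : Finset (Sym2 (ZMod 5 × Bool))) :
    (C ∩ petersenM3).card ≤ 3 :=
  (card_le_card inter_subset_right).trans_eq petersenM3_card

def petersenCycle5 : petersen.Walk (0, false) (0, false) :=
  .ofSupport [(0, false), (1, false), (2, false), (3, false), (4, false), (0, false)]
    (by decide) (by decide)

theorem petersenCycle5_isCycle : petersenCycle5.IsCycle :=
  Walk.isCycle_of_support_tail_nodup (by decide) (by decide)

def petersenCycle6 : petersen.Walk (0, false) (0, false) :=
  .ofSupport [(0, false), (1, false), (1, true), (3, true), (3, false), (4, false), (0, false)]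
    (by decide) (by decide)

theorem petersenCycle6_isCycle : petersenCycle6.IsCycle :=
  Walk.isCycle_of_support_tail_nodup (by decide) (by decide)

def petersenCycle8 : petersen.Walk (0, false) (0, false) :=
  .ofSupport [(0, false), (1, false), (2, false), (2, true), (0, true), (3, true), (3, false),
    (4, false), (0, false)] (by decide) (by decide)

theorem petersenCycle8_isCycle : petersenCycle8.IsCycle :=
  Walk.isCycle_of_support_tail_nodup (by decide) (by decide)

def petersenCycle9 : petersen.Walk (0, false) (0, false) :=
  .ofSupport [(0, false), (1, false), (1, true), (3, true), (3, false), (4, false), (4, true),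
    (2, true), (0, true), (0, false)] (by decide) (by decide)

theorem petersenCycle9_isCycle : petersenCycle9.IsCycle :=
  Walk.isCycle_of_support_tail_nodup (by decide) (by decide)

/-- For this permutable 3-matching of the Petersen graph, the maximum
number of matching edges on a cycle of length `l` is 2, 3, 2, 3 for `l = 5, 6, 8, 9`. -/
theorem stmt16 :
    IsGreatest {k | ∃ C ∈ cycleSets petersen 5, (C ∩ petersenM3).card = k} 2 ∧
    IsGreatest {k | ∃ C ∈ cycleSets petersen 6, (C ∩ petersenM3).card = k} 3 ∧
    IsGreatest {k | ∃ C ∈ cycleSets petersen 8, (C ∩ petersenM3).card = k} 2 ∧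
    IsGreatest {k | ∃ C ∈ cycleSets petersen 9, (C ∩ petersenM3).card = k} 3 :=
  ⟨isGreatest_card_inter_of_isCycle _ petersenCycle5_isCycle rfl (by decide)
      fun _ => card_inter_petersenM3_le_two (.inl rfl),
    isGreatest_card_inter_of_isCycle _ petersenCycle6_isCycle rfl (by decide)
      fun C _ => card_inter_petersenM3_le_three C,
    isGreatest_card_inter_of_isCycle _ petersenCycle8_isCycle rfl (by decide)
      fun _ => card_inter_petersenM3_le_two (.inr rfl),
    isGreatest_card_inter_of_isCycle _ petersenCycle9_isCycle rfl (by decide)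
      fun C _ => card_inter_petersenM3_le_three C⟩
end
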